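/- arXiv:1501.00562 — 2 statements merged into one kernel-verified Lean document; each statement's English description precedes it below -/
import Mathlib

section
/- The logarithmic mean θ is concave on (0,∞) × (0,∞): for all s₁,t₁,s₂,t₂ > 0 and λ ∈ [0,1], θ(λs₁ + (1-λ)s₂, λt₁ + (1-λ)t₂) ≥ λθ(s₁,t₁) + (1-λ)θ(s₂,t₂). -/
/-- The logarithmic mean, extended by `θ(s,s) = s` and `θ(s,0) = θ(0,t) = 0`. -/
noncomputable def logMean (s t : ℝ) : ℝ :=
  if s = t then s else if s = 0 ∨ t = 0 then 0 else (s - t) / (Real.log s - Real.log t)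

/-- Partial derivative of the logarithmic mean in the first variable. -/
noncomputable def logMean₁ (s t : ℝ) : ℝ := deriv (fun x => logMean x t) s

/-- Partial derivative of the logarithmic mean in the second variable. -/
noncomputable def logMean₂ (s t : ℝ) : ℝ := deriv (fun y => logMean s y) t

open Real intervalIntegral in
lemma logMean_eq_integral (s t : ℝ) (hs : 0 < s) (ht : 0 < t) :
    logMean s t = ∫ p in (0:ℝ)..1, s ^ (1 - p) * t ^ p := by
  have hc : ∀ p : ℝ, s ^ (1 - p) * t ^ p = s * Real.exp (p * (Real.log t - Real.log s)) := by
    intro p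
    rw [Real.rpow_def_of_pos hs, Real.rpow_def_of_pos ht, ← Real.exp_add]
    conv_rhs => rw [← Real.exp_log hs]
    rw [← Real.exp_add]
    congr 1
    rw [Real.log_exp]
    ring
  simp only [hc]
  rcases eq_or_ne s t with h | h
  · subst h
    simp [logMean]
  · set c : ℝ := Real.log t - Real.log s with hcdef
    have hcne : c ≠ 0 := by
      have : Real.log s ≠ Real.log t := fun habs =>
        h (Real.log_injOn_pos (Set.mem_Ioi.mpr hs) (Set.mem_Ioi.mpr ht) habs)
      simpa [hcdef, sub_eq_zero] using fun habs => this habs.symm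
    have hderiv : ∀ p ∈ Set.uIcc (0:ℝ) 1,
        HasDerivAt (fun p : ℝ => Real.exp (p * c) / c) (Real.exp (p * c)) p := by
      intro p _
      have h1 : HasDerivAt (fun p : ℝ => p * c) c p := by
        simpa using (hasDerivAt_id p).mul_const c
      have h2 := (Real.hasDerivAt_exp (p * c)).comp p h1
      have h3 := h2.div_const c
      simpa [mul_div_assoc, mul_div_cancel_right₀ _ hcne] using h3
    have hint : ∫ p in (0:ℝ)..1, Real.exp (p * c) = (Real.exp c - 1) / c := by
      rw [intervalIntegral.integral_eq_sub_of_hasDerivAt hderiv (by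
        apply Continuous.intervalIntegrable; continuity)]
      simp [sub_div]
    rw [intervalIntegral.integral_const_mul, hint]
    have hexpc : Real.exp c = t / s := by
      rw [hcdef, Real.exp_sub, Real.exp_log hs, Real.exp_log ht]
    rw [hexpc]
    have hlogne : Real.log s - Real.log t ≠ 0 := by
      intro habs; apply hcne; rw [hcdef]; linarith [sub_eq_zero.mp habs]
    have hlogne' : Real.log t - Real.log s ≠ 0 :=
      sub_ne_zero.mpr (Ne.symm (sub_ne_zero.mp hlogne))
    rw [logMean, if_neg h, if_neg (by simp [hs.ne', ht.ne']), hcdef]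
    field_simp
    ring

lemma rpow_superadd (a b c d p : ℝ) (ha : 0 < a) (hb : 0 < b) (hc : 0 < c) (hd : 0 < d)
    (hp0 : 0 ≤ p) (hp1 : p ≤ 1) :
    a ^ (1 - p) * c ^ p + b ^ (1 - p) * d ^ p ≤ (a + b) ^ (1 - p) * (c + d) ^ p := by
  have hS : (0:ℝ) < a + b := by positivity
  have hT : (0:ℝ) < c + d := by positivity
  have hM : (0:ℝ) ≤ (a + b) ^ (1 - p) * (c + d) ^ p := by positivity
  have key : ∀ x y : ℝ, 0 < x → 0 < y →
      x ^ (1 - p) * y ^ p ≤ (a + b) ^ (1 - p) * (c + d) ^ p *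
        ((1 - p) * (x / (a + b)) + p * (y / (c + d))) := by
    intro x y hx hy
    have h1 : x ^ (1 - p) * y ^ p
        = (a + b) ^ (1 - p) * (c + d) ^ p * ((x / (a + b)) ^ (1 - p) * (y / (c + d)) ^ p) := by
      rw [Real.div_rpow hx.le hS.le, Real.div_rpow hy.le hT.le]
      rw [div_mul_div_comm]
      field_simp
    rw [h1]
    have := Real.geom_mean_le_arith_mean2_weighted (by linarith : (0:ℝ) ≤ 1 - p) hp0
      (by positivity : (0:ℝ) ≤ x / (a + b)) (by positivity : (0:ℝ) ≤ y / (c + d)) (by ring)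
    exact mul_le_mul_of_nonneg_left this hM
  have h1 := key a c ha hc
  have h2 := key b d hb hd
  have hsum : ((1 - p) * (a / (a + b)) + p * (c / (c + d)))
      + ((1 - p) * (b / (a + b)) + p * (d / (c + d))) = 1 := by
    field_simp
    ring
  nlinarith [h1, h2, hsum, hM]

theorem logMean_concave (s₁ t₁ s₂ t₂ l : ℝ) (hs₁ : 0 < s₁) (ht₁ : 0 < t₁)
    (hs₂ : 0 < s₂) (ht₂ : 0 < t₂) (hl0 : 0 ≤ l) (hl1 : l ≤ 1) :
    l * logMean s₁ t₁ + (1 - l) * logMean s₂ t₂ ≤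
      logMean (l * s₁ + (1 - l) * s₂) (l * t₁ + (1 - l) * t₂) := by
  rcases eq_or_lt_of_le hl0 with h0 | h0
  · simp [← h0]
  rcases eq_or_lt_of_le hl1 with h1 | h1
  · simp [h1]
  have hl' : 0 < 1 - l := by linarith
  have hS : 0 < l * s₁ + (1 - l) * s₂ := by positivity
  have hT : 0 < l * t₁ + (1 - l) * t₂ := by positivity
  rw [logMean_eq_integral _ _ hs₁ ht₁, logMean_eq_integral _ _ hs₂ ht₂,
    logMean_eq_integral _ _ hS hT]
  have cont : ∀ s t : ℝ, 0 < s → 0 < t →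
      Continuous (fun p : ℝ => s ^ (1 - p) * t ^ p) := by
    intro s t hs ht
    have : (fun p : ℝ => s ^ (1 - p) * t ^ p)
        = fun p : ℝ => s * Real.exp (p * (Real.log t - Real.log s)) := by
      funext p
      rw [Real.rpow_def_of_pos hs, Real.rpow_def_of_pos ht, ← Real.exp_add]
      conv_rhs => rw [← Real.exp_log hs]
      rw [← Real.exp_add]
      congr 1
      rw [Real.log_exp]
      ring
    rw [this]; continuity
  have i₁ : IntervalIntegrable (fun p : ℝ => l * (s₁ ^ (1 - p) * t₁ ^ p))
      MeasureTheory.volume 0 1 :=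
    (continuous_const.mul (cont s₁ t₁ hs₁ ht₁)).intervalIntegrable 0 1
  have i₂ : IntervalIntegrable (fun p : ℝ => (1 - l) * (s₂ ^ (1 - p) * t₂ ^ p))
      MeasureTheory.volume 0 1 :=
    (continuous_const.mul (cont s₂ t₂ hs₂ ht₂)).intervalIntegrable 0 1
  rw [← intervalIntegral.integral_const_mul, ← intervalIntegral.integral_const_mul,
    ← intervalIntegral.integral_add i₁ i₂]
  apply intervalIntegral.integral_mono_on (by norm_num)
    (i₁.add i₂) ((cont _ _ hS hT).intervalIntegrable 0 1)
  intro p hp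
  obtain ⟨hp0, hp1⟩ := hp
  have hll : l ^ (1 - p) * l ^ p = l := by
    rw [← Real.rpow_add h0]; simp
  have hll' : (1 - l) ^ (1 - p) * (1 - l) ^ p = 1 - l := by
    rw [← Real.rpow_add hl']; simp
  have e1 : l * (s₁ ^ (1 - p) * t₁ ^ p) = (l * s₁) ^ (1 - p) * (l * t₁) ^ p := by
    rw [Real.mul_rpow hl0 hs₁.le, Real.mul_rpow hl0 ht₁.le, mul_mul_mul_comm, hll]
  have e2 : (1 - l) * (s₂ ^ (1 - p) * t₂ ^ p)
      = ((1 - l) * s₂) ^ (1 - p) * ((1 - l) * t₂) ^ p := by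
    rw [Real.mul_rpow hl'.le hs₂.le, Real.mul_rpow hl'.le ht₂.le, mul_mul_mul_comm, hll']
  rw [e1, e2]
  exact rpow_superadd _ _ _ _ p (by positivity) (by positivity) (by positivity) (by positivity)
    hp0 hp1
end

section
/- For every λ₁, λ₂ > 0 and s, t > 0, one has (λ₁θ₁(s,t) − λ₂θ₂(s,t))(s − t) ≤ (max{λ₁,λ₂} − min{λ₁,λ₂}) θ(s,t). -/
open Real

theorem logMean_comm (s t : ℝ) : logMean s t = logMean t s := by
  unfold logMean
  rcases eq_or_ne s t with rfl | hst
  · rfl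
  · simp only [if_neg hst, if_neg hst.symm, or_comm (a := t = 0), ← neg_div_neg_eq (s - t), neg_sub]

theorem logMean_of_ne {s t : ℝ} (hs : 0 < s) (ht : 0 < t) (hst : s ≠ t) :
    logMean s t = (s - t) / (log s - log t) := by
  simp [logMean, hst, hs.ne', ht.ne']

theorem log_sub_log_ne_zero {s t : ℝ} (hs : 0 < s) (ht : 0 < t) (hst : s ≠ t) :
    log s - log t ≠ 0 :=
  sub_ne_zero.2 fun h => hst (log_injOn_pos hs ht h)

theorem mul_self_le_mul_sinh (x : ℝ) : x * x ≤ x * sinh x := by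
  rcases le_total 0 x with hx | hx
  · exact mul_le_mul_of_nonneg_left (self_le_sinh_iff.2 hx) hx
  · exact mul_le_mul_of_nonpos_left (sinh_le_self_iff.2 hx) hx

theorem two_mul_mul_div_add_le_logMean {s t : ℝ} (hs : 0 < s) (ht : 0 < t) :
    2 * s * t / (s + t) ≤ logMean s t := by
  rcases eq_or_ne s t with rfl | hst
  · rw [logMean, if_pos rfl]
    field_simp
    linarith
  -- With `L = log (s / t)`, one has `2 sinh L = (s - t) (s + t) / (s t)`.
  have hL := log_sub_log_ne_zero hs ht hst
  have key := mul_self_le_mul_sinh (log s - log t)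
  rw [← log_div hs.ne' ht.ne', sinh_log (by positivity), log_div hs.ne' ht.ne'] at key
  set L := log s - log t
  have hdiff : (s - t) / L - 2 * s * t / (s + t) =
      2 * s * t * (L * ((s / t - (s / t)⁻¹) / 2) - L * L) / ((s + t) * L ^ 2) := by
    field_simp
    ring
  rw [logMean_of_ne hs ht hst, ← sub_nonneg, hdiff]
  exact div_nonneg (mul_nonneg (by positivity) (sub_nonneg.2 key)) (by positivity)

theorem two_mul_min_le_logMean_mul {l₁ l₂ s t : ℝ} (hl₁ : 0 ≤ l₁) (hl₂ : 0 ≤ l₂) (hs : 0 < s)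
    (ht : 0 < t) : 2 * min l₁ l₂ ≤ logMean s t * (l₁ / s + l₂ / t) := by
  have hharm := two_mul_mul_div_add_le_logMean hs ht
  have hθ : 0 ≤ logMean s t := le_trans (by positivity) hharm
  have h2 : 2 ≤ logMean s t * (1 / s + 1 / t) := by
    rw [div_le_iff₀ (by positivity)] at hharm
    field_simp
    linarith
  calc 2 * min l₁ l₂ ≤ logMean s t * (1 / s + 1 / t) * min l₁ l₂ :=
        mul_le_mul_of_nonneg_right h2 (le_min hl₁ hl₂)
    _ = logMean s t * (min l₁ l₂ / s + min l₁ l₂ / t) := by ring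
    _ ≤ logMean s t * (l₁ / s + l₂ / t) := by gcongr <;> simp

theorem hasDerivAt_logMean_left {s t : ℝ} (hs : 0 < s) (ht : 0 < t) (hst : s ≠ t) :
    HasDerivAt (fun x => logMean x t) (logMean s t * (s - logMean s t) / (s * (s - t))) s := by
  have hL := log_sub_log_ne_zero hs ht hst
  have hquot : HasDerivAt (fun x => (x - t) / (log x - log t))
      ((1 * (log s - log t) - (s - t) * s⁻¹) / (log s - log t) ^ 2) s :=
    ((hasDerivAt_id s).sub_const t).div ((hasDerivAt_log hs.ne').sub_const _) hL
  have heq : (fun x => logMean x t) =ᶠ[nhds s] fun x => (x - t) / (log x - log t) := by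
    filter_upwards [eventually_ne_nhds hst, eventually_gt_nhds hs] with x hxt hx
    exact logMean_of_ne hx ht hxt
  refine (hquot.congr_of_eventuallyEq heq).congr_deriv ?_
  rw [logMean_of_ne hs ht hst]
  have hD : s - t ≠ 0 := sub_ne_zero.2 hst
  field_simp

theorem logMean₁_eq {s t : ℝ} (hs : 0 < s) (ht : 0 < t) (hst : s ≠ t) :
    logMean₁ s t = logMean s t * (s - logMean s t) / (s * (s - t)) :=
  (hasDerivAt_logMean_left hs ht hst).deriv

theorem logMean₂_eq_logMean₁ (s t : ℝ) : logMean₂ s t = logMean₁ t s := by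
  simp only [logMean₁, logMean₂, logMean_comm s]

theorem logMean₂_eq {s t : ℝ} (hs : 0 < s) (ht : 0 < t) (hst : s ≠ t) :
    logMean₂ s t = logMean s t * (logMean s t - t) / (t * (s - t)) := by
  rw [logMean₂_eq_logMean₁, logMean₁_eq ht hs hst.symm, logMean_comm t s, ← neg_sub s t,
    ← neg_sub (logMean s t) t, mul_neg, mul_neg, neg_div_neg_eq]

theorem logMean_deriv_combination_bound (l₁ l₂ s t : ℝ) (hl₁ : 0 < l₁) (hl₂ : 0 < l₂)
    (hs : 0 < s) (ht : 0 < t) :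
    (l₁ * logMean₁ s t - l₂ * logMean₂ s t) * (s - t) ≤
      (max l₁ l₂ - min l₁ l₂) * logMean s t := by
  rcases eq_or_ne s t with rfl | hst
  · simpa [logMean] using mul_nonneg (sub_nonneg.2 (min_le_max (a := l₁) (b := l₂))) hs.le
  rw [logMean₁_eq hs ht hst, logMean₂_eq hs ht hst]
  set θ := logMean s t
  have hθ : 0 < θ := lt_of_lt_of_le (by positivity) (two_mul_mul_div_add_le_logMean hs ht)
  have hmin := two_mul_min_le_logMean_mul hl₁.le hl₂.le hs ht
  have hD : s - t ≠ 0 := sub_ne_zero.2 hst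
  calc (l₁ * (θ * (s - θ) / (s * (s - t))) - l₂ * (θ * (θ - t) / (t * (s - t)))) * (s - t)
      = θ * (l₁ + l₂ - θ * (l₁ / s + l₂ / t)) := by
        field_simp
        ring
    _ ≤ θ * (max l₁ l₂ - min l₁ l₂) := by
        refine mul_le_mul_of_nonneg_left ?_ hθ.le
        linarith [min_add_max l₁ l₂]
    _ = (max l₁ l₂ - min l₁ l₂) * θ := mul_comm _ _
end
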